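/- arXiv:2506.04183 — 2 statements merged into one kernel-verified Lean document; each statement's English description precedes it below -/
import Mathlib

section
/- Let L ≥ 1 and let n₀ = n, n₁, …, n_{L−1} be positive layer dimensions. Let φ : ℝ → ℝ be convex on all of ℝ and monotone (nondecreasing). For l = 1, …, L−1 let W^l be an n_l × n_{l−1} real matrix all of whose entries are nonnegative, V^l an n_l × n real matrix, and ω^l ∈ ℝ^{n_l}. Define the layer activations recursively by z⁰(x) = x and z^l(x) = φ applied componentwise to (W^l · z^{l−1}(x) + V^l · x + ω^l) for l = 1, …, L−1. Then for every l ∈ {0, 1, …, L−1} and every index i, the component map x ↦ (z^l(x)) i is convex on all of ℝ^n. -/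
/-!
Each layer feeds convex functions of `x` through a nonnegative combination (the `W` term,
convex because `W ≥ 0`), adds an affine function of `x`, and applies the convex nondecreasing
`φ`; all three operations preserve convexity, so induction on the layer index concludes.
-/

open Matrix Set

section

variable {𝕜 E β γ : Type*}

theorem ConvexOn.monotone_comp [Semiring 𝕜] [PartialOrder 𝕜] [AddCommMonoid E]
    [AddCommMonoid β] [PartialOrder β] [AddCommMonoid γ] [PartialOrder γ]
    [SMul 𝕜 E] [SMul 𝕜 β] [SMul 𝕜 γ] {s : Set E} {f : E → β} {g : β → γ}
    (hg : ConvexOn 𝕜 univ g) (hg_mono : Monotone g) (hf : ConvexOn 𝕜 s f) :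
    ConvexOn 𝕜 s (g ∘ f) :=
  ⟨hf.1, fun _ hx _ hy _ _ ha hb hab =>
    (hg_mono (hf.2 hx hy ha hb hab)).trans (hg.2 trivial trivial ha hb hab)⟩

theorem ConvexOn.finset_sum [Semiring 𝕜] [PartialOrder 𝕜] [AddCommMonoid E]
    [AddCommMonoid β] [PartialOrder β] [IsOrderedAddMonoid β] [SMul 𝕜 E] [Module 𝕜 β]
    {ι : Type*} {s : Set E} (hs : Convex 𝕜 s) {t : Finset ι} {f : ι → E → β}
    (hf : ∀ i ∈ t, ConvexOn 𝕜 s (f i)) : ConvexOn 𝕜 s (fun x => ∑ i ∈ t, f i x) := by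
  classical
  induction t using Finset.induction with
  | empty => simpa using convexOn_const 0 hs
  | insert i t hi ih =>
    simp only [Finset.sum_insert hi]
    exact (hf i (t.mem_insert_self i)).add (ih fun j hj => hf j (Finset.mem_insert_of_mem hj))

variable [Field 𝕜] [LinearOrder 𝕜] [IsStrictOrderedRing 𝕜] [AddCommGroup E] [Module 𝕜 E]
  {m k : Type*} [Fintype k] {s : Set E}

theorem ConvexOn.mulVec_apply_of_nonneg (hs : Convex 𝕜 s) {W : Matrix m k 𝕜}
    (hW : ∀ i j, 0 ≤ W i j) {f : E → k → 𝕜} (hf : ∀ j, ConvexOn 𝕜 s (fun x => f x j))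
    (i : m) : ConvexOn 𝕜 s (fun x => (W *ᵥ f x) i) := by
  simp only [mulVec, dotProduct]
  exact ConvexOn.finset_sum hs fun j _ => (hf j).smul (hW i j)

theorem ConvexOn.icnn_layer {n : Type*} [Fintype n] {s : Set (n → 𝕜)} (hs : Convex 𝕜 s)
    {φ : 𝕜 → 𝕜} (hφ : ConvexOn 𝕜 univ φ) (hφ_mono : Monotone φ) {W : Matrix m k 𝕜}
    (hW : ∀ i j, 0 ≤ W i j) (V : Matrix m n 𝕜) (ω : m → 𝕜) {z : (n → 𝕜) → k → 𝕜}
    (hz : ∀ j, ConvexOn 𝕜 s (fun x => z x j)) (i : m) :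
    ConvexOn 𝕜 s (fun x => φ ((W *ᵥ z x + V *ᵥ x + ω) i)) := by
  have hV : ConvexOn 𝕜 s (fun x => (V *ᵥ x) i) :=
    ((LinearMap.proj i).comp (mulVecLin V)).convexOn hs
  have hpre : ConvexOn 𝕜 s (fun x => (W *ᵥ z x + V *ᵥ x + ω) i) := by
    simp only [Pi.add_apply]
    exact ((ConvexOn.mulVec_apply_of_nonneg hs hW hz i).add hV).add_const (ω i)
  exact hφ.monotone_comp hφ_mono hpre

end

theorem icnn_layers_convex_general
    (L : ℕ)
    (dims : ℕ → ℕ)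
    (φ : ℝ → ℝ) (hφ_convex : ConvexOn ℝ Set.univ φ) (hφ_mono : Monotone φ)
    (W : (l : ℕ) → Matrix (Fin (dims (l + 1))) (Fin (dims l)) ℝ)
    (hW : ∀ l, l + 1 ≤ L - 1 → ∀ i j, 0 ≤ W l i j)
    (V : (l : ℕ) → Matrix (Fin (dims (l + 1))) (Fin (dims 0)) ℝ)
    (ω : (l : ℕ) → Fin (dims (l + 1)) → ℝ)
    (z : (l : ℕ) → (Fin (dims 0) → ℝ) → (Fin (dims l) → ℝ))
    (hz0 : ∀ x, z 0 x = x)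
    (hzrec : ∀ l, l + 1 ≤ L - 1 → ∀ x,
      z (l + 1) x = fun i => φ (((W l).mulVec (z l x) + (V l).mulVec x + ω l) i)) :
    ∀ l, l ≤ L - 1 → ∀ i : Fin (dims l),
      ConvexOn ℝ Set.univ (fun x => z l x i) := by
  intro l
  induction l with
  | zero =>
    intro _ i
    simp only [hz0]
    exact (LinearMap.proj i).convexOn convex_univ
  | succ l ih =>
    intro hl i
    have hz : (fun x => z (l + 1) x i)
        = fun x => φ ((W l *ᵥ z l x + V l *ᵥ x + ω l) i) := by
      funext x
      rw [hzrec l hl x]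
    rw [hz]
    exact .icnn_layer convex_univ hφ_convex hφ_mono (hW l hl) (V l) (ω l)
      (ih (by omega)) i

/-- In an input-convex neural network `z⁰ = x`,
`z^l = φ(W^l z^{l−1} + V^l x + ω^l)` for `l = 1, …, L−1`,
with convex nondecreasing activation `φ` and elementwise nonnegative
weight matrices `W^l`, every component of every layer activation `z^l`
is a convex function of the input `x`.
Here `dims l` is the width `n_l` of layer `l` (so `dims 0 = n` is the input
dimension), and `W l`, `V l`, `ω l` are the data of layer `l + 1`. -/
theorem icnn_layers_convex
    (L : ℕ) (hL : 1 ≤ L)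
    (dims : ℕ → ℕ) (hdims : ∀ l, l ≤ L - 1 → 0 < dims l)
    (φ : ℝ → ℝ) (hφ_convex : ConvexOn ℝ Set.univ φ) (hφ_mono : Monotone φ)
    (W : (l : ℕ) → Matrix (Fin (dims (l + 1))) (Fin (dims l)) ℝ)
    (hW : ∀ l, l + 1 ≤ L - 1 → ∀ i j, 0 ≤ W l i j)
    (V : (l : ℕ) → Matrix (Fin (dims (l + 1))) (Fin (dims 0)) ℝ)
    (ω : (l : ℕ) → Fin (dims (l + 1)) → ℝ)
    (z : (l : ℕ) → (Fin (dims 0) → ℝ) → (Fin (dims l) → ℝ))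
    (hz0 : ∀ x, z 0 x = x)
    (hzrec : ∀ l, l + 1 ≤ L - 1 → ∀ x,
      z (l + 1) x = fun i => φ (((W l).mulVec (z l x) + (V l).mulVec x + ω l) i)) :
    ∀ l, l ≤ L - 1 → ∀ i : Fin (dims l),
      ConvexOn ℝ Set.univ (fun x => z l x i) :=
  icnn_layers_convex_general L dims φ hφ_convex hφ_mono W hW V ω z hz0 hzrec
end

section
/- Let L ≥ 1, let n₀ = n, n₁, …, n_{L−1} be positive layer dimensions with scalar output. Let φ : ℝ → ℝ be convex on all of ℝ and monotone (nondecreasing). For l = 1, …, L−1 let W^l be an n_l × n_{l−1} real matrix all of whose entries are nonnegative, V^l an n_l × n real matrix, ω^l ∈ ℝ^{n_l}; let w^L ∈ ℝ^{n_{L−1}} have nonnegative entries, v^L ∈ ℝ^n, ω^L ∈ ℝ, and let U be an n × n real matrix. Define z⁰(x) = x, z^l(x) = φ applied componentwise to (W^l · z^{l−1}(x) + V^l · x + ω^l) for l = 1, …, L−1, and the quadratic-augmented output y(x) = (U · x) ⬝ (U · x) + w^L ⬝ z^{L−1}(x) + v^L ⬝ x + ω^L, where ⬝ denotes the Euclidean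 dot product on ℝ^n, so that the quadratic term equals xᵀ (Uᵀ U) x. Then y is convex on all of ℝ^n. -/
/-!
Each hidden unit is convex in the input, by induction on the layer: a convex nondecreasing
function of (a nonnegative combination of convex functions plus an affine function) is convex.
The output adds to a nonnegative combination of the last layer an affine function and
`(U x) ⬝ (U x)`, a convex quadratic form composed with a linear map.
-/

open Matrix Set

section ConvexOn

variable {𝕜 E ι : Type*}

theorem ConvexOn.sum [Semiring 𝕜] [PartialOrder 𝕜] [AddCommMonoid E] [SMul 𝕜 E]
    {β : Type*} [AddCommMonoid β] [PartialOrder β] [IsOrderedAddMonoid β] [Module 𝕜 β]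
    {s : Set E} (hs : Convex 𝕜 s) {t : Finset ι} {f : ι → E → β}
    (hf : ∀ i ∈ t, ConvexOn 𝕜 s (f i)) : ConvexOn 𝕜 s fun x => ∑ i ∈ t, f i x := by
  simpa only [← Finset.sum_apply] using
    Finset.sum_induction f (ConvexOn 𝕜 s) (fun _ _ => ConvexOn.add) (convexOn_const 0 hs) hf

theorem ConvexOn.comp_of_monotone [Semiring 𝕜] [PartialOrder 𝕜] [AddCommMonoid E] [SMul 𝕜 E]
    {α β : Type*} [AddCommMonoid α] [PartialOrder α] [SMul 𝕜 α]
    [AddCommMonoid β] [PartialOrder β] [SMul 𝕜 β]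
    {s : Set E} {f : E → α} {g : α → β} (hg : ConvexOn 𝕜 univ g) (hg' : Monotone g)
    (hf : ConvexOn 𝕜 s f) : ConvexOn 𝕜 s (g ∘ f) :=
  ⟨hf.1, fun _ hx _ hy _ _ ha hb hab =>
    (hg' (hf.2 hx hy ha hb hab)).trans (hg.2 (mem_univ _) (mem_univ _) ha hb hab)⟩

variable [Field 𝕜] [LinearOrder 𝕜] [IsStrictOrderedRing 𝕜] [Fintype ι]

theorem convexOn_dotProduct_self : ConvexOn 𝕜 univ fun v : ι → 𝕜 => v ⬝ᵥ v := by
  have hsq (i : ι) : ConvexOn 𝕜 univ fun v : ι → 𝕜 => v i ^ 2 :=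
    (Even.convexOn_pow (𝕜 := 𝕜) even_two).comp_linearMap
      (LinearMap.proj (R := 𝕜) (φ := fun _ : ι => 𝕜) i)
  simpa only [dotProduct, ← sq] using ConvexOn.sum convex_univ fun i _ => hsq i

variable [AddCommMonoid E] [Module 𝕜 E] {s : Set E}

theorem ConvexOn.dotProduct_of_nonneg (hs : Convex 𝕜 s) {w : ι → 𝕜} (hw : ∀ i, 0 ≤ w i)
    {g : E → ι → 𝕜} (hg : ∀ i, ConvexOn 𝕜 s fun x => g x i) :
    ConvexOn 𝕜 s fun x => w ⬝ᵥ g x :=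
  ConvexOn.sum hs fun i _ => (hg i).smul (hw i)

theorem ConvexOn.comp_mulVec_add_of_nonneg {κ : Type*} (hs : Convex 𝕜 s) {φ : 𝕜 → 𝕜}
    (hφ : ConvexOn 𝕜 univ φ) (hφ' : Monotone φ) {W : Matrix κ ι 𝕜} (hW : ∀ i j, 0 ≤ W i j)
    {g : E → ι → 𝕜} (hg : ∀ j, ConvexOn 𝕜 s fun x => g x j)
    {h : E → κ → 𝕜} (hh : ∀ i, ConvexOn 𝕜 s fun x => h x i) (i : κ) :
    ConvexOn 𝕜 s fun x => φ ((W *ᵥ g x + h x) i) :=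
  hφ.comp_of_monotone hφ' ((ConvexOn.dotProduct_of_nonneg hs (hW i) hg).add (hh i))

end ConvexOn

/-- `dims l` is the width `n_l` of layer `l` (`dims 0 = n`), and `W l`, `V l`, `ω l` are the
data of layer `l + 1`. -/
theorem icnn_quadratic_output_convex_general
    (L : ℕ)
    (dims : ℕ → ℕ)
    (φ : ℝ → ℝ) (hφ_convex : ConvexOn ℝ Set.univ φ) (hφ_mono : Monotone φ)
    (W : (l : ℕ) → Matrix (Fin (dims (l + 1))) (Fin (dims l)) ℝ)
    (hW : ∀ l, l + 1 ≤ L - 1 → ∀ i j, 0 ≤ W l i j)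
    (V : (l : ℕ) → Matrix (Fin (dims (l + 1))) (Fin (dims 0)) ℝ)
    (ω : (l : ℕ) → Fin (dims (l + 1)) → ℝ)
    (z : (l : ℕ) → (Fin (dims 0) → ℝ) → (Fin (dims l) → ℝ))
    (hz0 : ∀ x, z 0 x = x)
    (hzrec : ∀ l, l + 1 ≤ L - 1 → ∀ x,
      z (l + 1) x = fun i => φ (((W l).mulVec (z l x) + (V l).mulVec x + ω l) i))
    (wL : Fin (dims (L - 1)) → ℝ) (hwL : ∀ j, 0 ≤ wL j)
    (vL : Fin (dims 0) → ℝ) (ωL : ℝ)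
    (U : Matrix (Fin (dims 0)) (Fin (dims 0)) ℝ)
    (y : (Fin (dims 0) → ℝ) → ℝ)
    (hy : ∀ x, y x =
      (U.mulVec x) ⬝ᵥ (U.mulVec x) + wL ⬝ᵥ (z (L - 1) x) + vL ⬝ᵥ x + ωL) :
    ConvexOn ℝ Set.univ y := by
  have hz : ∀ l ≤ L - 1, ∀ i, ConvexOn ℝ univ fun x => z l x i := by
    intro l
    induction l with
    | zero =>
      intro _ i
      simp only [hz0]
      exact (LinearMap.proj i : (Fin (dims 0) → ℝ) →ₗ[ℝ] ℝ).convexOn convex_univ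
    | succ l ih =>
      intro hl
      have haffine (i : Fin (dims (l + 1))) : ConvexOn ℝ univ fun x => (V l *ᵥ x + ω l) i :=
        ((LinearMap.proj i ∘ₗ (V l).mulVecLin).convexOn convex_univ).add
          (convexOn_const _ convex_univ)
      simp only [hzrec l hl, add_assoc]
      exact ConvexOn.comp_mulVec_add_of_nonneg convex_univ hφ_convex hφ_mono (hW l hl)
        (ih (by omega)) haffine
  have hquad := convexOn_dotProduct_self.comp_linearMap U.mulVecLin
  have hlast := ConvexOn.dotProduct_of_nonneg convex_univ hwL (hz (L - 1) le_rfl)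
  have hlin := (dotProductBilin ℝ ℝ vL).convexOn convex_univ
  exact (((hquad.add hlast).add hlin).add (convexOn_const ωL convex_univ)).congr
    fun x _ => (hy x).symm

/-- The scalar output of an input-convex neural network augmented with a
convex quadratic term `xᵀ (Uᵀ U) x = (U x) ⬝ (U x)`:
`z⁰ = x`, `z^l = φ(W^l z^{l−1} + V^l x + ω^l)` (`l = 1, …, L−1`),
`y(x) = (U x) ⬝ (U x) + w^L ⬝ z^{L−1}(x) + v^L ⬝ x + ω^L`,
with convex nondecreasing activation `φ`, elementwise nonnegative inner
weight matrices `W^l`, and nonnegative output weight vector `w^L`,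
is convex in the input `x`.
Here `dims l` is the width `n_l` of layer `l` (`dims 0 = n`),
and `W l`, `V l`, `ω l` are the data of layer `l + 1`. -/
theorem icnn_quadratic_output_convex
    (L : ℕ) (hL : 1 ≤ L)
    (dims : ℕ → ℕ) (hdims : ∀ l, l ≤ L - 1 → 0 < dims l)
    (φ : ℝ → ℝ) (hφ_convex : ConvexOn ℝ Set.univ φ) (hφ_mono : Monotone φ)
    (W : (l : ℕ) → Matrix (Fin (dims (l + 1))) (Fin (dims l)) ℝ)
    (hW : ∀ l, l + 1 ≤ L - 1 → ∀ i j, 0 ≤ W l i j)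
    (V : (l : ℕ) → Matrix (Fin (dims (l + 1))) (Fin (dims 0)) ℝ)
    (ω : (l : ℕ) → Fin (dims (l + 1)) → ℝ)
    (z : (l : ℕ) → (Fin (dims 0) → ℝ) → (Fin (dims l) → ℝ))
    (hz0 : ∀ x, z 0 x = x)
    (hzrec : ∀ l, l + 1 ≤ L - 1 → ∀ x,
      z (l + 1) x = fun i => φ (((W l).mulVec (z l x) + (V l).mulVec x + ω l) i))
    (wL : Fin (dims (L - 1)) → ℝ) (hwL : ∀ j, 0 ≤ wL j)
    (vL : Fin (dims 0) → ℝ) (ωL : ℝ)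
    (U : Matrix (Fin (dims 0)) (Fin (dims 0)) ℝ)
    (y : (Fin (dims 0) → ℝ) → ℝ)
    (hy : ∀ x, y x =
      (U.mulVec x) ⬝ᵥ (U.mulVec x) + wL ⬝ᵥ (z (L - 1) x) + vL ⬝ᵥ x + ωL) :
    ConvexOn ℝ Set.univ y :=
  icnn_quadratic_output_convex_general L dims φ hφ_convex hφ_mono W hW V ω z hz0 hzrec wL hwL vL ωL
    U y hy
end
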